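/- Let Ω be a rational 1-form on ℂ² with Ω ≠ (0,0) and dΩ = 0, and assume Ω has no nonconstant rational first integral, i.e. every F ∈ K with dF ∧ Ω = 0 lies in the image of ℂ in K. If (Ω, η, ξ) is a projective triple, then there exist h ∈ K and a constant c ∈ ℂ such that η = h·Ω and ξ = −dh + (c − h²/2)·Ω. -/

import Mathlib

/-!
Since `Ω` is closed, (Proj.1) reads `η ∧ Ω = 0`, so `η = h Ω`. Then `dη = dh ∧ Ω`, and (Proj.2)
becomes `(dh + ξ) ∧ Ω = 0`, so `ξ = -dh + g Ω`. Substituting into (Proj.3) and using `d(dh) = 0`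
(the partial derivatives commute on `ℂ[x,y]`, hence on its fraction field) leaves
`d(g + h²/2) ∧ Ω = 0`: `g + h²/2` is a rational first integral, hence a constant `c`.
-/

open MvPolynomial

noncomputable section

/-- The field of rational functions `ℂ(x,y)`. -/
abbrev RatF : Type := FractionRing (MvPolynomial (Fin 2) ℂ)

/-- Wedge product of two rational 1-forms: `ω ∧ θ = ω₁ θ₂ - ω₂ θ₁`. -/
def wedge (ω θ : RatF × RatF) : RatF := ω.1 * θ.2 - ω.2 * θ.1

/-- Exterior derivative of a rational 1-form: `dω = ∂x ω₂ - ∂y ω₁`. -/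
def extd (dx dy : Derivation ℂ RatF RatF) (ω : RatF × RatF) : RatF := dx ω.2 - dy ω.1

/-- Differential of a rational function: `dF = (∂x F, ∂y F)`. -/
def d0 (dx dy : Derivation ℂ RatF RatF) (F : RatF) : RatF × RatF := (dx F, dy F)

/-- The derivations `dx`, `dy` extend the partial derivatives on `ℂ[x,y]`. -/
def ExtendsPartials (dx dy : Derivation ℂ RatF RatF) : Prop :=
  (∀ p : MvPolynomial (Fin 2) ℂ,
      dx (algebraMap (MvPolynomial (Fin 2) ℂ) RatF p)
        = algebraMap (MvPolynomial (Fin 2) ℂ) RatF (pderiv 0 p)) ∧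
  (∀ p : MvPolynomial (Fin 2) ℂ,
      dy (algebraMap (MvPolynomial (Fin 2) ℂ) RatF p)
        = algebraMap (MvPolynomial (Fin 2) ℂ) RatF (pderiv 1 p))

/-- `(Ω, η, ξ)` is a projective triple: (Proj.1) `dΩ = η∧Ω`, (Proj.2) `dη = Ω∧ξ`,
(Proj.3) `dξ = ξ∧η`. -/
def IsProjTriple (dx dy : Derivation ℂ RatF RatF) (Ω η ξ : RatF × RatF) : Prop :=
  extd dx dy Ω = wedge η Ω ∧ extd dx dy η = wedge Ω ξ ∧ extd dx dy ξ = wedge ξ η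

theorem Derivation.eq_zero_of_forall_algebraMap_eq_zero {R k K M : Type*} [CommRing R] [Field K]
    [Algebra R K] [IsFractionRing R K] [CommRing k] [Algebra k K] [AddCommGroup M] [Module K M]
    [Module k M] (D : Derivation k K M) (h : ∀ p : R, D (algebraMap R K p) = 0) (z : K) :
    D z = 0 := by
  obtain ⟨p, q, -, rfl⟩ := IsFractionRing.div_surjective (A := R) z
  simp [Derivation.leibniz_div, h]

theorem MvPolynomial.pderiv_pderiv_comm {σ R : Type*} [CommRing R] (i j : σ)
    (p : MvPolynomial σ R) : pderiv i (pderiv j p) = pderiv j (pderiv i p) := by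
  have h : ⁅pderiv i, pderiv j⁆ = (0 : Derivation R (MvPolynomial σ R) (MvPolynomial σ R)) :=
    derivation_ext fun k => by
      classical
      rw [Derivation.commutator_apply, pderiv_X, pderiv_X]
      simp [Pi.single_apply, apply_ite]
  simpa [Derivation.commutator_apply, sub_eq_zero] using congrArg (· p) h

theorem Derivation.map_sq_div_two {k K : Type*} [CommRing k] [Field K] [NeZero (2 : K)]
    [Algebra k K] (D : Derivation k K K) (a : K) : D (a ^ 2 / 2) = a * D a := by
  rw [D.leibniz_div_const _ _ (by exact_mod_cast D.map_natCast 2), D.leibniz_pow]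
  simp only [Nat.add_one_sub_one, pow_one, smul_eq_mul, nsmul_eq_mul, Nat.cast_ofNat]
  field_simp

theorem Prod.exists_eq_smul_of_mul_sub_mul_eq_zero {K : Type*} [Field K] {a b : K × K}
    (hb : b ≠ 0) (h : a.1 * b.2 - a.2 * b.1 = 0) : ∃ t : K, a = t • b := by
  rcases eq_or_ne b.1 0 with h1 | h1
  · have h2 : b.2 ≠ 0 := fun h2 => hb (Prod.ext h1 h2)
    refine ⟨a.2 / b.2, Prod.ext ?_ ?_⟩
    · simp_all
    · simp [h2]
  · refine ⟨a.1 / b.1, Prod.ext ?_ ?_⟩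
    · simp [h1]
    · simp only [Prod.smul_snd, smul_eq_mul]
      field_simp
      linear_combination -h

theorem ExtendsPartials.commute {dx dy : Derivation ℂ RatF RatF} (hext : ExtendsPartials dx dy)
    (z : RatF) : dx (dy z) = dy (dx z) := by
  have h := Derivation.eq_zero_of_forall_algebraMap_eq_zero ⁅dx, dy⁆ (fun p => by
    rw [Derivation.commutator_apply, hext.2, hext.1, hext.1, hext.2, ← map_sub,
      pderiv_pderiv_comm, sub_self, map_zero]) z
  rwa [Derivation.commutator_apply, sub_eq_zero] at h

theorem exists_eq_smul_of_wedge_eq_zero {ω θ : RatF × RatF} (hθ : θ ≠ 0) (h : wedge ω θ = 0) :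
    ∃ t : RatF, ω = t • θ :=
  Prod.exists_eq_smul_of_mul_sub_mul_eq_zero hθ h

theorem wedge_add_left (ω ω' θ : RatF × RatF) : wedge (ω + ω') θ = wedge ω θ + wedge ω' θ := by
  simp only [wedge, Prod.fst_add, Prod.snd_add]; ring

theorem wedge_anticomm (ω θ : RatF × RatF) : wedge ω θ = -wedge θ ω := by
  simp only [wedge]; ring

section FormCalculus

variable (dx dy : Derivation ℂ RatF RatF)

theorem extd_smul (f : RatF) (ω : RatF × RatF) :
    extd dx dy (f • ω) = wedge (d0 dx dy f) ω + f * extd dx dy ω := by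
  simp only [extd, wedge, d0, Prod.smul_fst, Prod.smul_snd, smul_eq_mul, Derivation.leibniz]
  ring

theorem extd_sub_wedge_of_closed (hcomm : ∀ z, dx (dy z) = dy (dx z)) {Ω : RatF × RatF}
    (hclosed : extd dx dy Ω = 0) (f g : RatF) :
    extd dx dy (-d0 dx dy f + g • Ω) - wedge (-d0 dx dy f + g • Ω) (f • Ω)
      = wedge (d0 dx dy (g + f ^ 2 / 2)) Ω := by
  have hΩ : dx Ω.2 - dy Ω.1 = 0 := hclosed
  simp only [extd, wedge, d0, Prod.fst_add, Prod.snd_add, Prod.fst_neg, Prod.snd_neg,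
    Prod.smul_fst, Prod.smul_snd, smul_eq_mul, map_add, map_neg, Derivation.leibniz,
    Derivation.map_sq_div_two]
  linear_combination g * hΩ - hcomm f

end FormCalculus

/-- If `Ω ≠ 0` is closed with no nonconstant rational first integral, then any projective
triple `(Ω, η, ξ)` has `η = h Ω` and `ξ = -dh + (c - h²/2) Ω` for some `h ∈ K`, `c ∈ ℂ`. -/
theorem projTriple_closed_noFirstIntegral (dx dy : Derivation ℂ RatF RatF)
    (hext : ExtendsPartials dx dy) (Ω η ξ : RatF × RatF) (hΩ : Ω ≠ 0)
    (hclosed : extd dx dy Ω = 0)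
    (hnofi : ∀ F : RatF, wedge (d0 dx dy F) Ω = 0 → F ∈ Set.range (algebraMap ℂ RatF))
    (h : IsProjTriple dx dy Ω η ξ) :
    ∃ (h' : RatF) (c : ℂ), η = h' • Ω ∧
      ξ = -(d0 dx dy h') + (algebraMap ℂ RatF c - h' ^ 2 / 2) • Ω := by
  obtain ⟨hP1, hP2, hP3⟩ := h
  obtain ⟨f, rfl⟩ := exists_eq_smul_of_wedge_eq_zero hΩ (hP1.symm.trans hclosed)
  rw [extd_smul, hclosed, mul_zero, add_zero] at hP2
  obtain ⟨g, hg⟩ : ∃ g : RatF, d0 dx dy f + ξ = g • Ω :=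
    exists_eq_smul_of_wedge_eq_zero hΩ <| by
      rw [wedge_add_left, hP2, wedge_anticomm Ω, neg_add_cancel]
  obtain rfl : ξ = -d0 dx dy f + g • Ω := by rw [← hg]; abel
  obtain ⟨c, hc⟩ := hnofi (g + f ^ 2 / 2) <| by
    rw [← extd_sub_wedge_of_closed dx dy hext.commute hclosed, hP3, sub_self]
  exact ⟨f, c, rfl, by rw [hc, add_sub_cancel_right]⟩
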